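/- Let (π,V) be an analytic family of admissible (𝔤,K)-modules over a connected analytic manifold Z with (π_{z₀},V) finitely generated for some z₀. If ω ⊂ Z is compact, then there is a compact subset C_ω ⊂ 𝔥* such that every Z(𝔤)-infinitesimal character occurring in (π_z,V) for z ∈ ω has Harish-Chandra parameter in C_ω. -/

import Mathlib

/-!
For each generator `T j`, the characteristic polynomial `p_z` of the compression of `μ z (T j)`
to the finite-dimensional subspace `W` generating `V` at `z₀` has coefficients analytic in `z`.
By Cayley–Hamilton `p_z(μ z (T j))` kills `W`, hence, being central, everything generated by `W`
at `z`. Generation at `z₀` is an open condition on analytic continuations of a basis of each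
isotypic component, so `p_z(μ z (T j))` vanishes near `z₀`, hence on all of `U` by the identity
theorem. Every eigenvalue of `μ z (T j)` is therefore a root of the monic `p_z`, and Cauchy's bound
with the boundedness of the coefficients on `ω` confines it to a compact set.
-/

open Polynomial Filter Topology

section Analytic

variable {𝕜 : Type*} [NontriviallyNormedField 𝕜] {E : Type*} [NormedAddCommGroup E]
  [NormedSpace 𝕜 E] {𝔸 : Type*} [NormedCommRing 𝔸] [NormedAlgebra 𝕜 𝔸] {U : Set E}

theorem MvPolynomial.analyticOnNhd_eval {σ : Type*} (p : MvPolynomial σ 𝔸) {f : σ → E → 𝔸}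
    (hf : ∀ i, AnalyticOnNhd 𝕜 (f i) U) :
    AnalyticOnNhd 𝕜 (fun z => MvPolynomial.eval (fun i => f i z) p) U := by
  induction p using MvPolynomial.induction_on with
  | C a => simpa using analyticOnNhd_const
  | add p q hp hq =>
    simp only [map_add]
    exact hp.add hq
  | mul_X p i hp => simpa using hp.mul (hf i)

theorem Matrix.analyticOnNhd_charpoly_coeff {n : Type*} [Fintype n] [DecidableEq n]
    {M : E → Matrix n n 𝔸} (hM : ∀ i j, AnalyticOnNhd 𝕜 (fun z => M z i j) U) (k : ℕ) :
    AnalyticOnNhd 𝕜 (fun z => (M z).charpoly.coeff k) U := by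
  have := MvPolynomial.analyticOnNhd_eval ((Matrix.charpoly.univ 𝔸 n).coeff k)
    (f := fun ij z => M z ij.1 ij.2) fun ij => hM ij.1 ij.2
  simp only [MvPolynomial.eval, Matrix.charpoly.univ_coeff_eval₂Hom] at this
  exact this

end Analytic

section CayleyHamilton

variable {R M N : Type*} [CommRing R] [AddCommGroup M] [Module R M] [AddCommGroup N] [Module R N]

theorem Polynomial.aeval_comp_eq_comp_aeval {f : Module.End R M} {g : Module.End R N}
    {L : N →ₗ[R] M} (h : f ∘ₗ L = L ∘ₗ g) (p : R[X]) : aeval f p ∘ₗ L = L ∘ₗ aeval g p := by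
  induction p using Polynomial.induction_on' with
  | add p q hp hq => simp [LinearMap.add_comp, LinearMap.comp_add, hp, hq]
  | monomial n a =>
    induction n with
    | zero => ext; simp [Module.algebraMap_end_apply]
    | succ n ih =>
      rw [← Polynomial.C_mul_X_pow_eq_monomial] at ih ⊢
      rw [pow_succ, ← mul_assoc, map_mul (aeval f), map_mul (aeval g), aeval_X, aeval_X,
        Module.End.mul_eq_comp, Module.End.mul_eq_comp, LinearMap.comp_assoc, h,
        ← LinearMap.comp_assoc, ih, LinearMap.comp_assoc]

theorem LinearMap.aeval_charpoly_compression_apply {f : Module.End R M} {W : Submodule R M}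
    [Module.Free R W] [Module.Finite R W] {π : M →ₗ[R] W} (hπ : π ∘ₗ W.subtype = LinearMap.id)
    (hf : W ∈ f.invtSubmodule) {x : M} (hx : x ∈ W) :
    aeval f (π ∘ₗ f ∘ₗ W.subtype).charpoly x = 0 := by
  have hcomm : f ∘ₗ W.subtype = W.subtype ∘ₗ (π ∘ₗ f ∘ₗ W.subtype) := by
    ext w
    have : π (f w) = ⟨f w, hf w.2⟩ := congr($hπ ⟨f w, hf w.2⟩)
    simp [this]
  have := congr($(aeval_comp_eq_comp_aeval hcomm (π ∘ₗ f ∘ₗ W.subtype).charpoly) ⟨x, hx⟩)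
  simpa [aeval_self_charpoly] using this

end CayleyHamilton

theorem IsCompact.exists_forall_norm_le_of_isRoot {Z : Type*} [TopologicalSpace Z] {K : Set Z}
    (hK : IsCompact K) {𝕜 : Type*} [NormedDivisionRing 𝕜] {p : Z → 𝕜[X]}
    (hmonic : ∀ z ∈ K, (p z).Monic) {n : ℕ} (hdeg : ∀ z ∈ K, (p z).natDegree ≤ n)
    (hcont : ∀ k, ContinuousOn (fun z => (p z).coeff k) K) :
    ∃ R, ∀ z ∈ K, ∀ a, (p z).IsRoot a → ‖a‖ ≤ R := by
  obtain ⟨M, hM⟩ := hK.exists_bound_of_continuousOn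
    (f := fun z (k : Fin n) => (p z).coeff k) (continuousOn_pi.2 fun k => hcont k)
  refine ⟨M.toNNReal + 1, fun z hz a ha => ?_⟩
  have hcoeff : ∀ k ∈ Finset.range (p z).natDegree, ‖(p z).coeff k‖₊ ≤ M.toNNReal := by
    intro k hk
    have hkn : k < n := (Finset.mem_range.mp hk).trans_le (hdeg z hz)
    rw [← NNReal.coe_le_coe, coe_nnnorm]
    exact ((norm_le_pi_norm _ ⟨k, hkn⟩).trans (hM z hz)).trans (Real.le_coe_toNNReal M)
  have hbound : cauchyBound (p z) ≤ M.toNNReal + 1 := by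
    rw [cauchyBound, (hmonic z hz).leadingCoeff, nnnorm_one, div_one]
    gcongr
    exact Finset.sup_le hcoeff
  exact_mod_cast (ha.norm_lt_cauchyBound (hmonic z hz).ne_zero).le.trans hbound

theorem exists_isCompact_forall_eigenvalues_mem {𝕜 : Type*} [NontriviallyNormedField 𝕜]
    [ProperSpace 𝕜] {V : Type*} [AddCommGroup V] [Module 𝕜 V] {Z : Type*} [TopologicalSpace Z]
    {ω : Set Z} (hω : IsCompact ω) {ι : Type*} {f : ι → Z → Module.End 𝕜 V} {p : ι → Z → 𝕜[X]}
    (hmonic : ∀ j, ∀ z ∈ ω, (p j z).Monic) {n : ℕ} (hdeg : ∀ j, ∀ z ∈ ω, (p j z).natDegree ≤ n)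
    (hcont : ∀ j k, ContinuousOn (fun z => (p j z).coeff k) ω)
    (hann : ∀ j, ∀ z ∈ ω, aeval (f j z) (p j z) = 0) :
    ∃ C : Set (ι → 𝕜), IsCompact C ∧
      ∀ z ∈ ω, ∀ (c : ι → 𝕜) (v : V), v ≠ 0 → (∀ j, f j z v = c j • v) → c ∈ C := by
  choose R hR using fun j => hω.exists_forall_norm_le_of_isRoot (hmonic j) (hdeg j) (hcont j)
  refine ⟨Set.univ.pi fun j => Metric.closedBall 0 (R j),
    isCompact_univ_pi fun j => isCompact_closedBall 0 (R j), ?_⟩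
  intro z hz c v hv hc j _
  have hroot : (p j z).eval (c j) • v = 0 := by
    rw [← Module.End.aeval_apply_of_mem_apply_eq_smul (hc j), hann j z hz, LinearMap.zero_apply]
  exact mem_closedBall_zero_iff.mpr (hR j z hz _ ((smul_eq_zero.mp hroot).resolve_right hv))

theorem iSupIndep.isCompl_iSup_ne {α ι : Type*} [CompleteLattice α] {t : ι → α}
    (ht : iSupIndep t) (htop : ⨆ i, t i = ⊤) (i : ι) : IsCompl (t i) (⨆ (j) (_ : j ≠ i), t j) :=
  ⟨ht i, by rw [codisjoint_iff, ← iSup_split_single t i, htop]⟩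

theorem Module.End.iSup_mem_invtSubmodule {R M : Type*} [Semiring R] [AddCommMonoid M]
    [Module R M] {f : Module.End R M} {ι : Sort*} {p : ι → Submodule R M}
    (h : ∀ i, p i ∈ f.invtSubmodule) : ⨆ i, p i ∈ f.invtSubmodule :=
  iSup_le fun i => (h i).trans (Submodule.comap_mono (le_iSup p i))

theorem iSupIndep.commute_projection {R M : Type*} [Ring R] [AddCommGroup M] [Module R M]
    {ι : Type*} {p : ι → Submodule R M} (hind : iSupIndep p) (htop : ⨆ i, p i = ⊤)
    {f : Module.End R M} (hf : ∀ i, p i ∈ f.invtSubmodule) (i : ι) :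
    Commute ((p i).projection _ (hind.isCompl_iSup_ne htop i)) f := by
  refine (LinearMap.IsIdempotentElem.commute_iff
    (Submodule.isIdempotentElem_projection _)).mpr ⟨?_, ?_⟩
  · rw [Submodule.range_projection]
    exact hf i
  · rw [Submodule.ker_projection]
    exact Module.End.iSup_mem_invtSubmodule fun j => Module.End.iSup_mem_invtSubmodule fun _ => hf j

section AnalyticFamilies

variable {E : Type*} [NormedAddCommGroup E] [NormedSpace ℝ E]
  {V : Type*} [AddCommGroup V] [Module ℂ V] {U : Set E}

/-- `V` carries no topology, so analyticity is tested against all linear functionals. -/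
def WeaklyAnalyticOn (U : Set E) (f : E → V) : Prop :=
  ∀ ℓ : Module.Dual ℂ V, AnalyticOnNhd ℝ (fun z => ℓ (f z)) U

namespace WeaklyAnalyticOn

theorem of_locally_finite_sum {f : E → V} (hU : IsOpen U)
    (h : ∀ z₀ ∈ U, ∃ U' : Set E, IsOpen U' ∧ z₀ ∈ U' ∧
      ∃ (r : ℕ) (w : Fin r → V) (c : Fin r → E → ℂ),
        (∀ i, AnalyticOnNhd ℝ (c i) U') ∧ ∀ z ∈ U' ∩ U, f z = ∑ i, c i z • w i) :
    WeaklyAnalyticOn U f := by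
  intro ℓ z₀ hz₀
  obtain ⟨U', hU', hz₀U', r, w, c, hc, hf⟩ := h z₀ hz₀
  have hsum : AnalyticAt ℝ (fun z => ∑ i, c i z * ℓ (w i)) z₀ :=
    Finset.univ.analyticAt_fun_sum fun i _ => (hc i z₀ hz₀U').mul analyticAt_const
  refine hsum.congr ?_
  filter_upwards [(hU'.inter hU).mem_nhds ⟨hz₀U', hz₀⟩] with z hz
  simp [hf z hz, smul_eq_mul]

theorem const (v : V) : WeaklyAnalyticOn U fun _ : E => v :=
  fun _ => analyticOnNhd_const

theorem add {f g : E → V} (hf : WeaklyAnalyticOn U f) (hg : WeaklyAnalyticOn U g) :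
    WeaklyAnalyticOn U (fun z => f z + g z) := by
  intro ℓ
  simp only [map_add]
  exact (hf ℓ).add (hg ℓ)

theorem smul {a : E → ℂ} {f : E → V} (ha : AnalyticOnNhd ℝ a U) (hf : WeaklyAnalyticOn U f) :
    WeaklyAnalyticOn U (fun z => a z • f z) := by
  intro ℓ
  simpa only [map_smul, smul_eq_mul] using ha.mul (hf ℓ)

theorem finset_sum {ι : Type*} (s : Finset ι) {f : ι → E → V}
    (hf : ∀ i ∈ s, WeaklyAnalyticOn U (f i)) : WeaklyAnalyticOn U (fun z => ∑ i ∈ s, f i z) := by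
  intro ℓ
  simpa only [map_sum] using s.analyticOnNhd_fun_sum fun i hi => hf i hi ℓ

theorem map {V' : Type*} [AddCommGroup V'] [Module ℂ V'] {f : E → V} (hf : WeaklyAnalyticOn U f)
    (L : V →ₗ[ℂ] V') : WeaklyAnalyticOn U (fun z => L (f z)) :=
  fun ℓ => hf (ℓ ∘ₗ L)

theorem eqOn_zero_of_preconnected_of_eventuallyEq_zero {f : E → V} (hf : WeaklyAnalyticOn U f)
    (hU : IsPreconnected U) {z₀ : E} (hz₀ : z₀ ∈ U) (h0 : f =ᶠ[𝓝 z₀] 0) : Set.EqOn f 0 U := by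
  intro z hz
  refine (Module.forall_dual_apply_eq_zero_iff ℂ (f z)).mp fun ℓ => ?_
  refine (hf ℓ).eqOn_zero_of_preconnected_of_eventuallyEq_zero hU hz₀ ?_ hz
  filter_upwards [h0] with z hz
  simp [hz]

theorem eventually_linearIndependent {X : Type*} [AddCommGroup X] [Module ℂ X]
    [FiniteDimensional ℂ X] {ι : Type*} [Finite ι] {u : ι → E → X}
    (hu : ∀ i, WeaklyAnalyticOn U (u i)) {z₀ : E} (hz₀ : z₀ ∈ U)
    (hli : LinearIndependent ℂ fun i => u i z₀) :
    ∀ᶠ z in 𝓝 z₀, LinearIndependent ℂ fun i => u i z := by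
  let e := (Module.finBasis ℂ X).equivFun
  have hcont : ContinuousAt (fun z i => e (u i z)) z₀ :=
    continuousAt_pi.2 fun i => continuousAt_pi.2 fun k =>
      (hu i (LinearMap.proj k ∘ₗ e.toLinearMap) z₀ hz₀).continuousAt
  filter_upwards [hcont.eventually (hli.map' e.toLinearMap e.ker).eventually] with z hz
  exact hz.of_comp

end WeaklyAnalyticOn

theorem LinearMap.analyticOnNhd_charpoly_coeff {W : Type*} [AddCommGroup W] [Module ℂ W]
    [Module.Free ℂ W] [Module.Finite ℂ W] {f : E → Module.End ℂ W}
    (hf : ∀ w, WeaklyAnalyticOn U fun z => f z w) (k : ℕ) :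
    AnalyticOnNhd ℝ (fun z => (f z).charpoly.coeff k) U := by
  let b := Module.Free.chooseBasis ℂ W
  simp_rw [← LinearMap.charpoly_toMatrix _ b]
  exact Matrix.analyticOnNhd_charpoly_coeff (fun i j => by
    simpa [LinearMap.toMatrix_apply] using hf (b j) (b.coord i)) k

variable {A : Type*} [Ring A] [Algebra ℂ A]

def orbitSpan (ρ : A →ₐ[ℂ] Module.End ℂ V) (W : Submodule ℂ V) : Submodule ℂ V :=
  Submodule.span ℂ {x | ∃ y : A, ∃ v ∈ W, x = ρ y v}

theorem orbitSpan_le_ker {ρ : A →ₐ[ℂ] Module.End ℂ V} {W : Submodule ℂ V} {x : A}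
    (hx : x ∈ Set.center A) (hW : ∀ w ∈ W, ρ x w = 0) : orbitSpan ρ W ≤ LinearMap.ker (ρ x) := by
  rw [orbitSpan, Submodule.span_le]
  rintro _ ⟨y, w, hw, rfl⟩
  change ρ x (ρ y w) = 0
  rw [← Module.End.mul_apply, ← map_mul, ← Semigroup.mem_center_iff.mp hx y, map_mul,
    Module.End.mul_apply, hW w hw, map_zero]

theorem WeaklyAnalyticOn.exists_of_mem_orbitSpan {μ : E → A →ₐ[ℂ] Module.End ℂ V}
    (hμ : ∀ y v, WeaklyAnalyticOn U fun z => μ z y v) {W : Submodule ℂ V} {z₀ : E} {v : V}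
    (hv : v ∈ orbitSpan (μ z₀) W) :
    ∃ B : E → V, WeaklyAnalyticOn U B ∧ B z₀ = v ∧ ∀ z, B z ∈ orbitSpan (μ z) W := by
  induction hv using Submodule.span_induction with
  | mem _ h =>
    obtain ⟨y, w, hw, rfl⟩ := h
    exact ⟨fun z => μ z y w, hμ y w, rfl, fun z => Submodule.subset_span ⟨y, w, hw, rfl⟩⟩
  | zero => exact ⟨0, WeaklyAnalyticOn.const 0, rfl, fun z => zero_mem _⟩
  | add _ _ _ _ h₁ h₂ =>
    obtain ⟨B₁, hB₁, rfl, hB₁mem⟩ := h₁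
    obtain ⟨B₂, hB₂, rfl, hB₂mem⟩ := h₂
    exact ⟨fun z => B₁ z + B₂ z, hB₁.add hB₂, rfl, fun z => add_mem (hB₁mem z) (hB₂mem z)⟩
  | smul c _ _ h =>
    obtain ⟨B, hB, rfl, hBmem⟩ := h
    exact ⟨fun z => c • B z, hB.smul analyticOnNhd_const, rfl,
      fun z => Submodule.smul_mem _ c (hBmem z)⟩

variable {Γ : Type*} {Viso : Γ → Submodule ℂ V} {μ : E → A →ₐ[ℂ] Module.End ℂ V}

theorem eventually_forall_mem_apply_eq_zero (hUo : IsOpen U)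
    (hfin : ∀ γ, FiniteDimensional ℂ (Viso γ)) (hindep : iSupIndep Viso)
    (hspan : ⨆ γ, Viso γ = ⊤) (hμ : ∀ y v, WeaklyAnalyticOn U fun z => μ z y v)
    (hcentral : ∀ z ∈ U, ∀ y ∈ Set.center A, ∀ γ, ∀ v ∈ Viso γ, μ z y v ∈ Viso γ)
    {W : Submodule ℂ V} {z₀ : E} (hz₀ : z₀ ∈ U) (hW : orbitSpan (μ z₀) W = ⊤) {x : E → A}
    (hxc : ∀ z ∈ U, x z ∈ Set.center A) (hxW : ∀ z ∈ U, ∀ w ∈ W, μ z (x z) w = 0) (γ : Γ) :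
    ∀ᶠ z in 𝓝 z₀, ∀ v ∈ Viso γ, μ z (x z) v = 0 := by
  have hK := hindep.isCompl_iSup_ne hspan γ
  let π := (Viso γ).projectionOnto _ hK
  let β := Module.finBasis ℂ (Viso γ)
  choose B hBan hBz₀ hBmem using fun s =>
    WeaklyAnalyticOn.exists_of_mem_orbitSpan hμ (hW ▸ Submodule.mem_top (x := (β s : V)))
  have hli : ∀ᶠ z in 𝓝 z₀, LinearIndependent ℂ fun s => π (B s z) :=
    WeaklyAnalyticOn.eventually_linearIndependent (fun s => (hBan s).map π) hz₀
      (by simpa [π, hBz₀] using β.linearIndependent)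
  filter_upwards [hli, hUo.mem_nhds hz₀] with z hli hz v hv
  have hker : Submodule.span ℂ (Set.range fun s => π (B s z)) ≤
      LinearMap.ker (μ z (x z) ∘ₗ (Viso γ).subtype) := by
    rw [Submodule.span_le]
    rintro _ ⟨s, rfl⟩
    have hcomm := LinearMap.congr_fun
      (hindep.commute_projection hspan (hcentral z hz (x z) (hxc z hz)) γ).eq (B s z)
    have hBker : μ z (x z) (B s z) = 0 := orbitSpan_le_ker (hxc z hz) (hxW z hz) (hBmem s z)
    rw [Module.End.mul_apply, Module.End.mul_apply, hBker, map_zero] at hcomm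
    exact hcomm.symm
  have htop := hli.span_eq_top_of_card_eq_finrank' (by simp)
  simpa using hker (htop ▸ Submodule.mem_top (x := (⟨v, hv⟩ : Viso γ)))

theorem eqOn_zero_of_annihilates_generators (hUo : IsOpen U) (hUconn : IsPreconnected U)
    (hfin : ∀ γ, FiniteDimensional ℂ (Viso γ)) (hindep : iSupIndep Viso)
    (hspan : ⨆ γ, Viso γ = ⊤) (hμ : ∀ y v, WeaklyAnalyticOn U fun z => μ z y v)
    (hcentral : ∀ z ∈ U, ∀ y ∈ Set.center A, ∀ γ, ∀ v ∈ Viso γ, μ z y v ∈ Viso γ)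
    {W : Submodule ℂ V} {z₀ : E} (hz₀ : z₀ ∈ U) (hW : orbitSpan (μ z₀) W = ⊤) {x : E → A}
    (hxc : ∀ z ∈ U, x z ∈ Set.center A) (hxan : ∀ v, WeaklyAnalyticOn U fun z => μ z (x z) v)
    (hxW : ∀ z ∈ U, ∀ w ∈ W, μ z (x z) w = 0) : Set.EqOn (fun z => μ z (x z)) 0 U := by
  intro z hz
  have hiso : ∀ γ, ∀ v ∈ Viso γ, μ z (x z) v = 0 := fun γ v hv =>
    (hxan v).eqOn_zero_of_preconnected_of_eventuallyEq_zero hUconn hz₀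
      ((eventually_forall_mem_apply_eq_zero hUo hfin hindep hspan hμ hcentral hz₀ hW hxc hxW
        γ).mono fun _ h => h v hv) hz
  exact LinearMap.ker_eq_top.mp (top_le_iff.mp (hspan ▸ iSup_le fun γ v hv => hiso γ v hv))

theorem WeaklyAnalyticOn.apply_aeval (hμ : ∀ y v, WeaklyAnalyticOn U fun z => μ z y v) (y : A)
    {p : E → ℂ[X]} {n : ℕ} (hdeg : ∀ z, (p z).natDegree < n)
    (hp : ∀ k, AnalyticOnNhd ℝ (fun z => (p z).coeff k) U) (v : V) :
    WeaklyAnalyticOn U fun z => μ z (aeval y (p z)) v := by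
  have hsum : (fun z => μ z (aeval y (p z)) v) =
      fun z => ∑ k ∈ Finset.range n, (p z).coeff k • μ z (y ^ k) v := by
    funext z
    simp [aeval_eq_sum_range' (hdeg z)]
  rw [hsum]
  exact .finset_sum _ fun k _ => (hμ _ _).smul (hp k)

theorem aeval_charpoly_compression_eq_zero (hUo : IsOpen U) (hUconn : IsPreconnected U)
    (hfin : ∀ γ, FiniteDimensional ℂ (Viso γ)) (hindep : iSupIndep Viso)
    (hspan : ⨆ γ, Viso γ = ⊤) (hμ : ∀ y v, WeaklyAnalyticOn U fun z => μ z y v)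
    (hcentral : ∀ z ∈ U, ∀ y ∈ Set.center A, ∀ γ, ∀ v ∈ Viso γ, μ z y v ∈ Viso γ)
    {W : Submodule ℂ V} [FiniteDimensional ℂ W] {z₀ : E} (hz₀ : z₀ ∈ U)
    (hW : orbitSpan (μ z₀) W = ⊤) {π : V →ₗ[ℂ] W} (hπ : π ∘ₗ W.subtype = LinearMap.id) {t : A}
    (ht : t ∈ Set.center A) (hWinv : ∀ z ∈ U, W ∈ (μ z t).invtSubmodule) {z : E} (hz : z ∈ U) :
    aeval (μ z t) (π ∘ₗ μ z t ∘ₗ W.subtype).charpoly = 0 := by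
  have hdeg : ∀ z, (π ∘ₗ μ z t ∘ₗ W.subtype).charpoly.natDegree < Module.finrank ℂ W + 1 :=
    fun z => (LinearMap.charpoly_natDegree _).trans_lt (Nat.lt_succ_self _)
  have hcoeff := LinearMap.analyticOnNhd_charpoly_coeff (f := fun z => π ∘ₗ μ z t ∘ₗ W.subtype)
    fun w => (hμ t w).map π
  rw [aeval_algHom_apply]
  refine eqOn_zero_of_annihilates_generators hUo hUconn hfin hindep hspan hμ hcentral hz₀ hW
    (x := fun z => aeval t (π ∘ₗ μ z t ∘ₗ W.subtype).charpoly) (fun _ _ => ?_)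
    (WeaklyAnalyticOn.apply_aeval hμ t hdeg hcoeff) (fun z hz w hw => ?_) hz
  · exact Algebra.adjoin_le (S := Subalgebra.center ℂ A) (Set.singleton_subset_iff.mpr ht)
      (aeval_mem_adjoin_singleton ℂ t)
  · rw [← aeval_algHom_apply]
    exact LinearMap.aeval_charpoly_compression_apply hπ (hWinv z hz) hw

end AnalyticFamilies

theorem stmt17_general
    {E : Type*} [NormedAddCommGroup E] [NormedSpace ℝ E]
    {V : Type*} [AddCommGroup V] [Module ℂ V]
    {A : Type*} [Ring A] [Algebra ℂ A]
    (U : Set E) (hUo : IsOpen U) (hUconn : IsPreconnected U)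
    (Γ : Type*) (Viso : Γ → Submodule ℂ V)
    (hfin : ∀ γ, FiniteDimensional ℂ (Viso γ))
    (hindep : iSupIndep Viso)
    (hspan : ⨆ γ, Viso γ = ⊤)
    (μ : E → A →ₐ[ℂ] Module.End ℂ V)
    (hanal : ∀ (y : A) (v : V), ∀ z₀ ∈ U, ∃ U' : Set E, IsOpen U' ∧ z₀ ∈ U' ∧
      ∃ (r : ℕ) (w : Fin r → V) (c : Fin r → E → ℂ),
        (∀ i, AnalyticOnNhd ℝ (c i) U') ∧ ∀ z ∈ U' ∩ U, μ z y v = ∑ i, c i z • w i)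
    (hcentral : ∀ z ∈ U, ∀ y ∈ Set.center A, ∀ γ, ∀ v ∈ Viso γ, μ z y v ∈ Viso γ)
    (z₀ : E) (hz₀ : z₀ ∈ U)
    (hfg : ∃ F : Finset Γ,
      Submodule.span ℂ {x : V | ∃ y : A, ∃ v ∈ ⨆ γ ∈ F, Viso γ, x = μ z₀ y v} = ⊤)
    {m : ℕ} (T : Fin m → A) (hT : ∀ j, T j ∈ Set.center A)
    (ω : Set E) (hω : IsCompact ω) (hωU : ω ⊆ U) :
    ∃ C : Set (Fin m → ℂ), IsCompact C ∧
      ∀ z ∈ ω, ∀ (c : Fin m → ℂ) (v : V), v ≠ 0 →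
        (∀ j, μ z (T j) v = c j • v) → c ∈ C := by
  obtain ⟨F, hF⟩ := hfg
  let W : Submodule ℂ V := ⨆ γ ∈ F, Viso γ
  have : FiniteDimensional ℂ W := by
    have := hfin
    rw [show W = F.sup Viso from (F.sup_eq_iSup Viso).symm]
    infer_instance
  have hWinv : ∀ z ∈ U, ∀ y ∈ Set.center A, W ∈ (μ z y).invtSubmodule := fun z hz y hy =>
    Module.End.iSup_mem_invtSubmodule fun γ =>
      Module.End.iSup_mem_invtSubmodule fun _ => hcentral z hz y hy γ
  obtain ⟨π, hπ⟩ := W.subtype.exists_leftInverse_of_injective W.ker_subtype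
  have hμ : ∀ y v, WeaklyAnalyticOn U fun z => μ z y v := fun y v =>
    .of_locally_finite_sum hUo (hanal y v)
  have hcoeff : ∀ j k,
      ContinuousOn (fun z => (π ∘ₗ μ z (T j) ∘ₗ W.subtype).charpoly.coeff k) ω := fun j k =>
    (LinearMap.analyticOnNhd_charpoly_coeff (f := fun z => π ∘ₗ μ z (T j) ∘ₗ W.subtype)
      (fun w => (hμ (T j) w).map π) k).continuousOn.mono hωU
  exact exists_isCompact_forall_eigenvalues_mem hω (fun _ _ _ => LinearMap.charpoly_monic _)
    (fun _ _ _ => (LinearMap.charpoly_natDegree _).le) hcoeff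
    fun j z hz => aeval_charpoly_compression_eq_zero hUo hUconn hfin hindep hspan hμ hcentral hz₀
      hF hπ (hT j) (fun z hz => hWinv z hz _ (hT j)) (hωU hz)

/-- Let `(μ, V)` be an analytic family of admissible `(𝔤,K)`-modules over
a connected analytic manifold (a connected open `U ⊆ E`), finitely generated at some
`z₀ ∈ U`, with the same encoding as in Statement 16.  Let `T₁, …, T_m` generate the
center of `A` (standing for `Z(𝔤)`; infinitesimal characters are parametrized by their
values on the generators, the Harish-Chandra parameter).  Then for every compact
`ω ⊆ U` there is a compact set `C ⊆ ℂᵐ` containing the parameter of every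
infinitesimal character occurring in `(μ_z, V)` for `z ∈ ω`. -/
theorem stmt17
    {E : Type*} [NormedAddCommGroup E] [NormedSpace ℝ E]
    {V : Type*} [AddCommGroup V] [Module ℂ V]
    {A : Type*} [Ring A] [Algebra ℂ A]
    (U : Set E) (hUo : IsOpen U) (hUconn : IsPreconnected U)
    (Γ : Type*) (Viso : Γ → Submodule ℂ V)
    (hfin : ∀ γ, FiniteDimensional ℂ (Viso γ))
    (hindep : iSupIndep Viso)
    (hspan : ⨆ γ, Viso γ = ⊤)
    (μ : E → A →ₐ[ℂ] Module.End ℂ V)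
    (hanal : ∀ (y : A) (v : V), ∀ z₀ ∈ U, ∃ U' : Set E, IsOpen U' ∧ z₀ ∈ U' ∧
      ∃ (r : ℕ) (w : Fin r → V) (c : Fin r → E → ℂ),
        (∀ i, AnalyticOnNhd ℝ (c i) U') ∧ ∀ z ∈ U' ∩ U, μ z y v = ∑ i, c i z • w i)
    (hcentral : ∀ z ∈ U, ∀ y ∈ Set.center A, ∀ γ, ∀ v ∈ Viso γ, μ z y v ∈ Viso γ)
    (z₀ : E) (hz₀ : z₀ ∈ U)
    (hfg : ∃ F : Finset Γ,
      Submodule.span ℂ {x : V | ∃ y : A, ∃ v ∈ ⨆ γ ∈ F, Viso γ, x = μ z₀ y v} = ⊤)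
    {m : ℕ} (T : Fin m → A) (hT : ∀ j, T j ∈ Set.center A)
    (hTgen : Algebra.adjoin ℂ (Set.range T) = Subalgebra.center ℂ A)
    (ω : Set E) (hω : IsCompact ω) (hωU : ω ⊆ U) :
    ∃ C : Set (Fin m → ℂ), IsCompact C ∧
      ∀ z ∈ ω, ∀ (c : Fin m → ℂ) (v : V), v ≠ 0 →
        (∀ j, μ z (T j) v = c j • v) → c ∈ C :=
  stmt17_general U hUo hUconn Γ Viso hfin hindep hspan μ hanal hcentral z₀ hz₀ hfg T hT ω hω hωU
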